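/- Fix κ ∈ ℝ, t > 0, α ∈ (0,2], β ∈ (0,1]. Suppose φ_X is a characteristic function satisfying φ_X(hκ) = 1 − h^α|κ|^α + o(h^α) as h → 0⁺. If h, r → 0⁺ with h^α/r^β → 1, then E_β((t^β/r^β)(φ_X(hκ) − 1)) → E_β(−t^β|κ|^α). -/

import Mathlib

/-!
The Mittag-Leffler function `E_β` is entire for `β > 0`: from `Γ(x + 1) = ∫ e^{-s} s^x ds` one
gets `Γ(x + 1) ≥ a^x e^{-a}` for every `a ≥ 0`, so on each ball its power series is dominated by
a convergent geometric series. It therefore suffices that the arguments converge, and indeed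
`(t/r)^β (φ_X(hκ) - 1) = -t^β |κ|^α (h^α/r^β) + t^β o(h^α)/r^β → -t^β |κ|^α`.
-/

open Filter Real Set MeasureTheory Asymptotics Topology

theorem Real.rpow_mul_exp_neg_le_Gamma_add_one {a x : ℝ} (ha : 0 ≤ a) (hx : 0 ≤ x) :
    a ^ x * exp (-a) ≤ Gamma (x + 1) := by
  have hint : IntegrableOn (fun s => exp (-s) * s ^ x) (Ioi 0) := by
    simpa using GammaIntegral_convergent (s := x + 1) (by linarith)
  calc a ^ x * exp (-a) = ∫ s in Ioi a, exp (-s) * a ^ x := by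
        rw [integral_mul_const, integral_exp_neg_Ioi, mul_comm]
    _ ≤ ∫ s in Ioi a, exp (-s) * s ^ x :=
        setIntegral_mono_on ((integrableOn_exp_neg_Ioi a).mul_const _)
          (hint.mono_set (Ioi_subset_Ioi ha)) measurableSet_Ioi fun s hs => by
          gcongr; exact hs.le
    _ ≤ ∫ s in Ioi 0, exp (-s) * s ^ x :=
        setIntegral_mono_set hint
          ((ae_restrict_iff' measurableSet_Ioi).2 (ae_of_all _ fun s hs =>
            mul_nonneg (exp_pos _).le (rpow_nonneg hs.le x)))
          (Eventually.of_forall (Ioi_subset_Ioi ha))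
    _ = Gamma (x + 1) := by rw [Gamma_eq_integral (by linarith), add_sub_cancel_right]

theorem summable_pow_div_Gamma_mul_add_one {β : ℝ} (hβ : 0 < β) (C : ℝ) :
    Summable fun k : ℕ => C ^ k / Gamma (β * k + 1) := by
  set a := (2 * |C| + 1) ^ β⁻¹
  have ha : 0 ≤ a := by positivity
  have haβ : a ^ β = 2 * |C| + 1 := by
    rw [← rpow_mul (by positivity), inv_mul_cancel₀ hβ.ne', rpow_one]
  have hq : |C| / (2 * |C| + 1) < 1 := by
    rw [div_lt_one (by positivity)]; linarith [abs_nonneg C]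
  refine Summable.of_norm_bounded
    ((summable_geometric_of_lt_one (by positivity) hq).mul_left (exp a)) fun k => ?_
  have hΓ : a ^ (β * k) * exp (-a) ≤ Gamma (β * k + 1) :=
    rpow_mul_exp_neg_le_Gamma_add_one ha (by positivity)
  rw [rpow_mul ha, haβ, rpow_natCast] at hΓ
  have hpos : 0 < (2 * |C| + 1) ^ k * exp (-a) := by positivity
  calc ‖C ^ k / Gamma (β * k + 1)‖ = |C| ^ k / Gamma (β * k + 1) := by
        rw [norm_div, norm_pow, norm_eq_abs, norm_of_nonneg (hpos.trans_le hΓ).le]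
    _ ≤ |C| ^ k / ((2 * |C| + 1) ^ k * exp (-a)) := by gcongr
    _ = exp a * (|C| / (2 * |C| + 1)) ^ k := by rw [exp_neg, div_pow]; field_simp

noncomputable def mittagLeffler (β : ℝ) (z : ℂ) : ℂ :=
  ∑' k : ℕ, z ^ k / Complex.Gamma (β * k + 1)

theorem continuous_mittagLeffler {β : ℝ} (hβ : 0 < β) : Continuous (mittagLeffler β) := by
  refine continuous_iff_continuousAt.2 fun z => ?_
  have hball : ContinuousOn (mittagLeffler β) (Metric.ball 0 (‖z‖ + 1)) := by
    refine continuousOn_tsum (fun k => by fun_prop)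
      (summable_pow_div_Gamma_mul_add_one hβ (‖z‖ + 1)) fun k w hw => ?_
    have hΓ : Complex.Gamma (β * k + 1) = Gamma (β * k + 1) := by
      rw [← Complex.Gamma_ofReal]; push_cast; rfl
    have hΓpos : 0 < Gamma (β * k + 1) := Gamma_pos_of_pos (by positivity)
    rw [norm_div, norm_pow, hΓ, Complex.norm_real, Real.norm_of_nonneg hΓpos.le]
    gcongr
    simpa using (mem_ball_zero_iff.1 hw).le
  exact hball.continuousAt (Metric.isOpen_ball.mem_nhds (by simp))

theorem Asymptotics.IsLittleO.tendsto_div_nhds_zero_of_tendsto_div {ι 𝕜 : Type*} [RCLike 𝕜]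
    {l : Filter ι} {f : ι → 𝕜} {g r : ι → ℝ} {c : ℝ} (hf : f =o[l] g)
    (hgr : Tendsto (fun i => g i / r i) l (𝓝 c)) :
    Tendsto (fun i => f i / r i) l (𝓝 0) := by
  have hr : (fun i => ((r i : 𝕜))⁻¹) =O[l] fun i => (r i)⁻¹ :=
    isBigO_of_le _ fun i => by simp
  have hgr' : (fun i => g i * (r i)⁻¹) =O[l] fun _ => (1 : ℝ) := by
    simpa only [div_eq_mul_inv] using hgr.isBigO_one ℝ
  simpa only [div_eq_mul_inv] using
    (isLittleO_one_iff ℝ).1 ((hf.mul_isBigO hr).trans_isBigO hgr')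

theorem tendsto_rpow_div_mul_sub_one_of_isLittleO {ι : Type*} {l : Filter ι} {α β κ t : ℝ}
    {φ : ℝ → ℂ}
    (hφ : (fun s : ℝ => φ (s * κ) - (1 - ((s ^ α * |κ| ^ α : ℝ) : ℂ))) =o[𝓝[>] 0] fun s => s ^ α)
    {h r : ι → ℝ} (hh : ∀ i, 0 < h i) (hh0 : Tendsto h l (𝓝 0))
    (hhr : Tendsto (fun i => h i ^ α / r i ^ β) l (𝓝 1)) :
    Tendsto (fun i => ((t ^ β / r i ^ β : ℝ) : ℂ) * (φ (h i * κ) - 1)) l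
      (𝓝 ((-(t ^ β * |κ| ^ α) : ℝ) : ℂ)) := by
  have hrem : Tendsto (fun i => (φ (h i * κ) - (1 - ((h i ^ α * |κ| ^ α : ℝ) : ℂ))) /
      ((r i ^ β : ℝ) : ℂ)) l (𝓝 0) :=
    (hφ.comp_tendsto (tendsto_nhdsWithin_iff.2 ⟨hh0, Eventually.of_forall hh⟩)
      ).tendsto_div_nhds_zero_of_tendsto_div hhr
  have hlim := ((hrem.const_mul ((t ^ β : ℝ) : ℂ)).sub
    ((Complex.continuous_ofReal.tendsto _).comp hhr |>.const_mul ((t ^ β * |κ| ^ α : ℝ) : ℂ)))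
  convert hlim using 2 with i
  · simp only [Function.comp_apply]; push_cast; ring
  · push_cast; ring

theorem compound_fractional_poisson_scaling_limit_general
    (α β : ℝ) (hβ0 : 0 < β)
    (κ t : ℝ) (φX : ℝ → ℂ)
    (hexp : (fun h : ℝ => φX (h * κ) - (1 - ((h ^ α * |κ| ^ α : ℝ) : ℂ)))
      =o[nhdsWithin 0 (Set.Ioi 0)] fun h : ℝ => h ^ α)
    (h r : ℕ → ℝ) (hh : ∀ n, 0 < h n)
    (hh0 : Tendsto h atTop (nhds 0))
    (hratio : Tendsto (fun n => h n ^ α / r n ^ β) atTop (nhds 1)) :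
    Tendsto
      (fun n => ∑' k : ℕ,
        (((t ^ β / r n ^ β : ℝ) : ℂ) * (φX (h n * κ) - 1)) ^ k / Complex.Gamma (β * k + 1))
      atTop
      (nhds (∑' k : ℕ, ((-(t ^ β * |κ| ^ α) : ℝ) : ℂ) ^ k / Complex.Gamma (β * k + 1))) :=
  (continuous_mittagLeffler hβ0).continuousAt.tendsto.comp
    (tendsto_rpow_div_mul_sub_one_of_isLittleO hexp hh hh0 hratio)

/-- Convergence of the rescaled characteristic function of the compound
fractional Poisson process to the Mittag-Leffler characteristic function of the
fractional diffusion: if `φ_X(hκ) = 1 - h^α|κ|^α + o(h^α)` as `h → 0⁺` and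
`h, r → 0⁺` with `h^α/r^β → 1`, then
`E_β((t/r)^β(φ_X(hκ)-1)) → E_β(-t^β|κ|^α)`. -/
theorem compound_fractional_poisson_scaling_limit
    (α β : ℝ) (hα0 : 0 < α) (hα2 : α ≤ 2) (hβ0 : 0 < β) (hβ1 : β ≤ 1)
    (κ t : ℝ) (ht : 0 < t) (φX : ℝ → ℂ)
    (hexp : (fun h : ℝ => φX (h * κ) - (1 - ((h ^ α * |κ| ^ α : ℝ) : ℂ)))
      =o[nhdsWithin 0 (Set.Ioi 0)] fun h : ℝ => h ^ α)
    (h r : ℕ → ℝ) (hh : ∀ n, 0 < h n) (hr : ∀ n, 0 < r n)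
    (hh0 : Tendsto h atTop (nhds 0)) (hr0 : Tendsto r atTop (nhds 0))
    (hratio : Tendsto (fun n => h n ^ α / r n ^ β) atTop (nhds 1)) :
    Tendsto
      (fun n => ∑' k : ℕ,
        (((t ^ β / r n ^ β : ℝ) : ℂ) * (φX (h n * κ) - 1)) ^ k / Complex.Gamma (β * k + 1))
      atTop
      (nhds (∑' k : ℕ, ((-(t ^ β * |κ| ^ α) : ℝ) : ℂ) ^ k / Complex.Gamma (β * k + 1))) :=
  compound_fractional_poisson_scaling_limit_general α β hβ0 κ t φX hexp h r hh hh0 hratio
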